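/- arXiv:1412.7335 — 4 statements merged into one kernel-verified Lean document; each statement's English description precedes it below -/
import Mathlib

section
/- For all p, q with 0 < q ≤ p < 1, the Kullback-Leibler divergence satisfies KL(q,p) ≥ (p-q)²/(2(p+q)), where KL(q,p) = q·log(q/p) + (1-q)·log((1-q)/(1-p)). -/
/-!
Bound the two logarithms of `KL q p` separately: `log t ≥ (t - t⁻¹) / 2` for `t = q / p ≤ 1`
(this is `sinh (log t) ≤ log t`), and `log x ≥ 1 - x⁻¹` for `x = (1 - q) / (1 - p)`.
The two lower bounds add up to `(p - q)² / (2p)`, which dominates `(p - q)² / (2(p + q))`.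
-/

/-- Binary Kullback-Leibler divergence `KL(q,p)`. -/
noncomputable def KL (q p : ℝ) : ℝ :=
  q * Real.log (q / p) + (1 - q) * Real.log ((1 - q) / (1 - p))

open Real

lemma Real.sub_inv_div_two_le_log {t : ℝ} (ht : 0 < t) (ht1 : t ≤ 1) :
    (t - t⁻¹) / 2 ≤ log t := by
  rw [← sinh_log ht]
  exact sinh_le_self_iff.mpr (log_nonpos ht.le ht1)

lemma sq_sub_sq_div_le_mul_log_div {a b : ℝ} (ha : 0 < a) (hab : a ≤ b) :
    (a ^ 2 - b ^ 2) / (2 * b) ≤ a * log (a / b) := by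
  have hb : 0 < b := ha.trans_le hab
  calc (a ^ 2 - b ^ 2) / (2 * b) = a * ((a / b - (a / b)⁻¹) / 2) := by
        field_simp
    _ ≤ a * log (a / b) :=
        mul_le_mul_of_nonneg_left
          (sub_inv_div_two_le_log (div_pos ha hb) ((div_le_one hb).mpr hab)) ha.le

lemma sub_le_mul_log_div {a b : ℝ} (ha : 0 < a) (hb : 0 < b) : a - b ≤ a * log (a / b) :=
  calc a - b = a * (1 - (a / b)⁻¹) := by field_simp
    _ ≤ a * log (a / b) :=
        mul_le_mul_of_nonneg_left (one_sub_inv_le_log_of_pos (div_pos ha hb)) ha.le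

lemma sq_sub_div_two_mul_le_KL {p q : ℝ} (hq : 0 < q) (hqp : q ≤ p) (hp : p < 1) :
    (p - q) ^ 2 / (2 * p) ≤ KL q p := by
  have hp0 : 0 < p := hq.trans_le hqp
  calc (p - q) ^ 2 / (2 * p) = (q ^ 2 - p ^ 2) / (2 * p) + ((1 - q) - (1 - p)) := by
        field_simp
        ring
    _ ≤ KL q p :=
        add_le_add (sq_sub_sq_div_le_mul_log_div hq hqp)
          (sub_le_mul_log_div (by linarith) (by linarith))

theorem stmt0 (p q : ℝ) (hq : 0 < q) (hqp : q ≤ p) (hp : p < 1) :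
    KL q p ≥ (p - q) ^ 2 / (2 * (p + q)) := by
  have hp0 : 0 < p := hq.trans_le hqp
  calc (p - q) ^ 2 / (2 * (p + q)) ≤ (p - q) ^ 2 / (2 * p) :=
        div_le_div_of_nonneg_left (sq_nonneg _) (by positivity) (by linarith)
    _ ≤ KL q p := sq_sub_div_two_mul_le_KL hq hqp hp
end

section
/- For all p, q ∈ (0,1), KL(p,q) ≥ KL(q,p) if and only if p(1-p) ≥ q(1-q), where KL is the binary Kullback-Leibler divergence. -/
open Real Set

theorem hasDerivAt_mul_log_add_sub_log_sub {c t : ℝ} (h₁ : 0 < c + t) (h₂ : 0 < c - t) :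
    HasDerivAt (fun t => c * (log (c + t) - log (c - t))) (2 * c ^ 2 / (c ^ 2 - t ^ 2)) t := by
  have hplus : HasDerivAt (fun t => log (c + t)) (1 / (c + t)) t := by
    simpa using ((hasDerivAt_id t).const_add c).log h₁.ne'
  have hminus : HasDerivAt (fun t => log (c - t)) (-1 / (c - t)) t := by
    simpa using ((hasDerivAt_id t).const_sub c).log h₂.ne'
  refine ((hplus.sub hminus).const_mul c).congr_deriv ?_
  have : c ^ 2 - t ^ 2 = (c + t) * (c - t) := by ring
  rw [this]
  field_simp
  ring

theorem strictAntiOn_mul_log_add_sub_log_sub {d : ℝ} (hd : 0 < d) :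
    StrictAntiOn (fun c => c * (log (c + d) - log (c - d))) (Ioi d) := by
  intro a (ha : d < a) b (hb : d < b) hab
  let F t := a * (log (a + t) - log (a - t)) - b * (log (b + t) - log (b - t))
  have hF : ∀ t ∈ Icc 0 d,
      HasDerivAt F (2 * a ^ 2 / (a ^ 2 - t ^ 2) - 2 * b ^ 2 / (b ^ 2 - t ^ 2)) t := by
    rintro t ⟨ht₀, htd⟩
    exact (hasDerivAt_mul_log_add_sub_log_sub (by linarith) (by linarith)).sub
      (hasDerivAt_mul_log_add_sub_log_sub (by linarith) (by linarith))
  have hF_mono : StrictMonoOn F (Icc 0 d) := by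
    refine strictMonoOn_of_deriv_pos (convex_Icc 0 d)
      (fun t ht => (hF t ht).continuousAt.continuousWithinAt) fun t ht => ?_
    rw [interior_Icc] at ht
    rw [(hF t (Ioo_subset_Icc_self ht)).deriv, sub_pos,
      div_lt_div_iff₀ (by nlinarith [ht.1, ht.2]) (by nlinarith [ht.1, ht.2])]
    nlinarith [mul_pos (pow_pos ht.1 2) (mul_pos (sub_pos.2 hab) (by linarith : 0 < a + b))]
  have := hF_mono (left_mem_Icc.2 hd.le) (right_mem_Icc.2 hd.le) hd
  simp only [F, add_zero, sub_zero, sub_self, mul_zero] at this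
  linarith

theorem KL_one_sub_one_sub (p q : ℝ) : KL (1 - p) (1 - q) = KL p q := by
  simp only [KL, sub_sub_cancel]
  ring

theorem KL_sub_KL {p q : ℝ} (hp₀ : p ≠ 0) (hq₀ : q ≠ 0) (hp₁ : p ≠ 1) (hq₁ : q ≠ 1) :
    KL p q - KL q p
      = (p + q) * (log p - log q) - (2 - p - q) * (log (1 - q) - log (1 - p)) := by
  have hp₁' : 1 - p ≠ 0 := sub_ne_zero.2 hp₁.symm
  have hq₁' : 1 - q ≠ 0 := sub_ne_zero.2 hq₁.symm
  simp only [KL, log_div hp₀ hq₀, log_div hq₀ hp₀, log_div hp₁' hq₁', log_div hq₁' hp₁']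
  ring

theorem KL_lt_KL_of_lt_of_add_lt_one {p q : ℝ} (hq : 0 < q) (hqp : q < p) (hpq : p + q < 1) :
    KL q p < KL p q := by
  have key := strictAntiOn_mul_log_add_sub_log_sub (d := (p - q) / 2) (by linarith)
    (a := (p + q) / 2) (by simp only [mem_Ioi]; linarith)
    (b := 1 - (p + q) / 2) (by simp only [mem_Ioi]; linarith) (by linarith)
  have h₁ : (p + q) / 2 + (p - q) / 2 = p := by ring
  have h₂ : (p + q) / 2 - (p - q) / 2 = q := by ring
  have h₃ : 1 - (p + q) / 2 + (p - q) / 2 = 1 - q := by ring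
  have h₄ : 1 - (p + q) / 2 - (p - q) / 2 = 1 - p := by ring
  simp only [h₁, h₂, h₃, h₄] at key
  have := KL_sub_KL (p := p) (q := q) (by linarith) hq.ne' (by linarith) (by linarith)
  linarith

theorem KL_lt_KL_of_mul_pos {p q : ℝ} (hq : q ∈ Ioo (0 : ℝ) 1)
    (h : 0 < (p - q) * (1 - p - q)) : KL q p < KL p q := by
  rcases pos_and_pos_or_neg_and_neg_of_mul_pos h with ⟨hqp, hpq⟩ | ⟨hpq, hqp⟩
  · exact KL_lt_KL_of_lt_of_add_lt_one hq.1 (by linarith) (by linarith)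
  · rw [← KL_one_sub_one_sub q, ← KL_one_sub_one_sub p]
    exact KL_lt_KL_of_lt_of_add_lt_one (by linarith [hq.2]) (by linarith) (by linarith)

theorem KL_eq_KL_of_mul_eq_zero {p q : ℝ} (h : (p - q) * (1 - p - q) = 0) :
    KL p q = KL q p := by
  rcases mul_eq_zero.1 h with h | h
  · rw [sub_eq_zero.1 h]
  · obtain rfl : q = 1 - p := by linarith
    simpa only [sub_sub_cancel] using (KL_one_sub_one_sub p (1 - p)).symm

theorem stmt1 (p q : ℝ) (hp : p ∈ Set.Ioo (0 : ℝ) 1) (hq : q ∈ Set.Ioo (0 : ℝ) 1) :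
    KL p q ≥ KL q p ↔ p * (1 - p) ≥ q * (1 - q) := by
  have hvar : p * (1 - p) - q * (1 - q) = (p - q) * (1 - p - q) := by ring
  rcases lt_trichotomy 0 ((p - q) * (1 - p - q)) with h | h | h
  · have := KL_lt_KL_of_mul_pos hq h
    constructor <;> intro <;> linarith
  · have := KL_eq_KL_of_mul_eq_zero h.symm
    constructor <;> intro <;> linarith
  · have hswap : (q - p) * (1 - q - p) = -((p - q) * (1 - p - q)) := by ring
    have := KL_lt_KL_of_mul_pos hp (by linarith)
    constructor <;> intro <;> linarith
end

section
/- For all p, q ∈ (0,1), min{KL(q,p), KL(p,q)} ≥ (p-q)²/(2(p+q)), where KL is the binary Kullback-Leibler divergence. -/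
open Real

lemma two_mul_sub_sqrt_mul_le_mul_log_div {a b : ℝ} (ha : 0 < a) (hb : 0 < b) :
    2 * (a - √a * √b) ≤ a * log (a / b) := by
  have hsa : 0 < √a := sqrt_pos.2 ha
  have hsb : 0 < √b := sqrt_pos.2 hb
  have hlog : log (a / b) = 2 * log (√a / √b) := by
    have hsq : a / b = (√a / √b) ^ 2 := by rw [div_pow, sq_sqrt ha.le, sq_sqrt hb.le]
    rw [hsq, log_pow]
    norm_num
  have hle : 1 - (√a / √b)⁻¹ ≤ log (√a / √b) := one_sub_inv_le_log_of_pos (div_pos hsa hsb)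
  calc 2 * (a - √a * √b) = 2 * a * (1 - (√a / √b)⁻¹) := by
        field_simp
        linear_combination (-√b) * sq_sqrt ha.le
    _ ≤ 2 * a * log (√a / √b) := by gcongr
    _ = a * log (a / b) := by rw [hlog]; ring

lemma sq_sub_sqrt_le_KL {p q : ℝ} (hp : p ∈ Set.Ioo (0 : ℝ) 1) (hq : q ∈ Set.Ioo (0 : ℝ) 1) :
    (√q - √p) ^ 2 ≤ KL q p := by
  obtain ⟨hp0, hp1⟩ := hp
  obtain ⟨hq0, hq1⟩ := hq
  have h₁ := two_mul_sub_sqrt_mul_le_mul_log_div hq0 hp0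
  have h₂ := two_mul_sub_sqrt_mul_le_mul_log_div (sub_pos.2 hq1) (sub_pos.2 hp1)
  have amgm : 2 * (√(1 - q) * √(1 - p)) ≤ (1 - q) + (1 - p) := by
    nlinarith [sq_nonneg (√(1 - q) - √(1 - p)), sq_sqrt (sub_pos.2 hq1).le,
      sq_sqrt (sub_pos.2 hp1).le]
  have hsq : (√q - √p) ^ 2 = q + p - 2 * (√q * √p) := by
    rw [sub_sq, sq_sqrt hq0.le, sq_sqrt hp0.le]; ring
  rw [KL, hsq]
  linarith

lemma sq_sub_div_le_sq_sub_sqrt {p q : ℝ} (hp : 0 ≤ p) (hq : 0 ≤ q) :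
    (p - q) ^ 2 / (2 * (p + q)) ≤ (√q - √p) ^ 2 := by
  have hsp := sq_sqrt hp
  have hsq := sq_sqrt hq
  have hfactor : (p - q) ^ 2 = (√q - √p) ^ 2 * (√p + √q) ^ 2 := by
    linear_combination (q - p + √q ^ 2 - √p ^ 2) * hsp - (q - p + √q ^ 2 - √p ^ 2) * hsq
  have hsum : (√p + √q) ^ 2 ≤ 2 * (p + q) := by nlinarith [sq_nonneg (√p - √q)]
  refine div_le_of_le_mul₀ (by positivity) (sq_nonneg _) ?_
  rw [hfactor]
  gcongr

lemma sq_sub_div_le_KL {p q : ℝ} (hp : p ∈ Set.Ioo (0 : ℝ) 1) (hq : q ∈ Set.Ioo (0 : ℝ) 1) :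
    (p - q) ^ 2 / (2 * (p + q)) ≤ KL q p :=
  (sq_sub_div_le_sq_sub_sqrt hp.1.le hq.1.le).trans (sq_sub_sqrt_le_KL hp hq)

theorem stmt2 (p q : ℝ) (hp : p ∈ Set.Ioo (0 : ℝ) 1) (hq : q ∈ Set.Ioo (0 : ℝ) 1) :
    min (KL q p) (KL p q) ≥ (p - q) ^ 2 / (2 * (p + q)) := by
  refine le_min (sq_sub_div_le_KL hp hq) ?_
  have hsymm : (q - p) ^ 2 / (2 * (q + p)) = (p - q) ^ 2 / (2 * (p + q)) := by ring
  exact hsymm ▸ sq_sub_div_le_KL hq hp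
end

section
/- Let α₁, α₂ > 0 with weights β₁ = α₁/(α₁+α₂), β₂ = α₂/(α₁+α₂), and let 0 < q < p with p/q ≥ 1+ε for some ε > 0. Then α₁p + α₂q − (α₁+α₂)p^{β₁}q^{β₂} ≥ c(ε, β₁)·p for some constant c(ε, β₁) > 0 depending only on ε and β₁. -/
open Real

/-!
Put `t = q / p`. The gap equals `p · g(t)` with `g(t) = β₁ + (1 - β₁) t - t ^ (1 - β₁)`.
On `(0, 1]` the slope of `t ↦ t ^ (1 - β₁)` is at least `1 - β₁`, so `g` is antitone there;
since `t ≤ 1 / (1 + ε) < 1`, we get `g(t) ≥ g(1 / (1 + ε))`, which is positive by strict Bernoulli.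
-/

theorem mul_sub_le_rpow_sub_rpow {s t u : ℝ} (hs₀ : 0 ≤ s) (hs₁ : s ≤ 1) (ht : 0 ≤ t)
    (htu : t ≤ u) (hu₀ : 0 < u) (hu₁ : u ≤ 1) : s * (u - t) ≤ u ^ s - t ^ s := by
  have bernoulli : (t / u) ^ s ≤ 1 + s * (t / u - 1) := by
    simpa using rpow_one_add_le_one_add_mul_self (s := t / u - 1)
      (by linarith [div_nonneg ht hu₀.le]) hs₀ hs₁
  have hut : 0 ≤ 1 - t / u := by rw [sub_nonneg, div_le_one hu₀]; exact htu
  have hu_le : u ≤ u ^ s := by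
    simpa using rpow_le_rpow_of_exponent_ge hu₀ hu₁ hs₁
  have hsplit : t ^ s = u ^ s * (t / u) ^ s := by
    rw [div_rpow ht hu₀.le, mul_div_cancel₀ _ (rpow_pos_of_pos hu₀ s).ne']
  calc s * (u - t) = s * u * (1 - t / u) := by field_simp
    _ ≤ s * u ^ s * (1 - t / u) := by gcongr
    _ ≤ u ^ s - t ^ s := by rw [hsplit]; nlinarith [rpow_pos_of_pos hu₀ s]

noncomputable def amgmGap (β t : ℝ) : ℝ := β + (1 - β) * t - t ^ (1 - β)

theorem amgmGap_pos {β t : ℝ} (hβ₀ : 0 < β) (hβ₁ : β < 1) (ht : 0 ≤ t) (ht₁ : t ≠ 1) :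
    0 < amgmGap β t := by
  have := rpow_one_add_lt_one_add_mul_self (s := t - 1) (by linarith) (sub_ne_zero.2 ht₁)
    (p := 1 - β) (by linarith) (by linarith)
  simp only [add_sub_cancel] at this
  unfold amgmGap
  linarith

theorem amgmGap_antitoneOn {β : ℝ} (hβ₀ : 0 ≤ β) (hβ₁ : β ≤ 1) :
    AntitoneOn (amgmGap β) (Set.Ioc 0 1) := by
  intro t ht u hu htu
  have := mul_sub_le_rpow_sub_rpow (s := 1 - β) (by linarith) (by linarith) ht.1.le htu hu.1 hu.2
  unfold amgmGap
  linarith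

theorem mul_amgmGap_div {β p q : ℝ} (hp : 0 < p) (hq : 0 ≤ q) :
    p * amgmGap β (q / p) = β * p + (1 - β) * q - p ^ β * q ^ (1 - β) := by
  have hgm : p * (q / p) ^ (1 - β) = p ^ β * q ^ (1 - β) := by
    have hp_split : p = p ^ β * p ^ (1 - β) := by rw [← rpow_add hp]; simp
    nth_rw 1 [hp_split]
    rw [div_rpow hq hp.le]
    field_simp
  rw [amgmGap, mul_sub, hgm]
  field_simp

/-- Quantitative weighted AM-GM gap: with normalized weights `β₁` and `β₂ = 1 - β₁`,
the gap `β₁ p + β₂ q - p ^ β₁ * q ^ β₂` is at least `c · p` for a constant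
`c = c(ε, β₁) > 0` depending only on `ε` and `β₁`.  (For general `α₁, α₂ > 0` the gap
`α₁ p + α₂ q - (α₁+α₂) p^{β₁} q^{β₂}` is `(α₁+α₂)` times this normalized gap.) -/
theorem stmt5 (ε β₁ : ℝ) (hε : 0 < ε) (hβ₁ : 0 < β₁) (hβ₁' : β₁ < 1) :
    ∃ c > 0, ∀ p q : ℝ, 0 < q → q < p → p ≤ 1 → p / q ≥ 1 + ε →
      β₁ * p + (1 - β₁) * q - p ^ β₁ * q ^ (1 - β₁) ≥ c * p := by
  set t₀ : ℝ := 1 / (1 + ε)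
  have ht₀ : t₀ ∈ Set.Ioo 0 1 := ⟨by positivity, by rw [div_lt_one] <;> linarith⟩
  refine ⟨amgmGap β₁ t₀, amgmGap_pos hβ₁ hβ₁' ht₀.1.le ht₀.2.ne, ?_⟩
  intro p q hq hqp _ hratio
  have hp : 0 < p := hq.trans hqp
  have ht : q / p ≤ t₀ := by
    simpa only [one_div_div] using one_div_le_one_div_of_le (by linarith) hratio
  have hgap : amgmGap β₁ t₀ ≤ amgmGap β₁ (q / p) :=
    amgmGap_antitoneOn hβ₁.le hβ₁'.le ⟨by positivity, ht.trans ht₀.2.le⟩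
      ⟨ht₀.1, ht₀.2.le⟩ ht
  rw [← mul_amgmGap_div hp hq.le, ge_iff_le, mul_comm]
  exact mul_le_mul_of_nonneg_left hgap hp.le
end
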